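/- Fix an integer n ≥ 1 and let I ⊂ C[X_1, …, X_{n+3}] be the ideal generated by the 2×2 minors of the 2×(n+1) matrix whose columns are (X_1 + X_2, X_1 X_2) and (X_{k+2}, X_{k+3}) for k = 1, …, n. Then the quotient ring C[X_1, …, X_{n+3}]/I has Krull dimension 3; equivalently, the ideal I has codimension n in the (n+3)-dimensional polynomial ring. -/

import Mathlib

open MvPolynomial

/-- First row `(X_1 + X_2, X_3, X_4, …, X_{n+2})` of the matrix of the presentation
(variables `X_1, …, X_{n+3}` are 0-indexed as `X 0, …, X (n+2)`). -/
noncomputable def row1 (n : ℕ) : Fin (n + 1) → MvPolynomial (Fin (n + 3)) ℂ := fun k =>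
  if (k : ℕ) = 0 then X 0 + X 1 else X ⟨(k : ℕ) + 1, by omega⟩

/-- Second row `(X_1 X_2, X_4, X_5, …, X_{n+3})` of the matrix of the presentation. -/
noncomputable def row2 (n : ℕ) : Fin (n + 1) → MvPolynomial (Fin (n + 3)) ℂ := fun k =>
  if (k : ℕ) = 0 then X 0 * X 1 else X ⟨(k : ℕ) + 2, by omega⟩

/-!
Lower bound: on the main component the columns of the matrix are all multiples of
`(a + b, ab)`, which gives a map to `ℂ[a, b, c]`; its kernel and the kernels of its
specialisations at `b = 0`, `b = c = 0`, `a = b = c = 0` form a chain of four primes.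

Upper bound: a chain of primes `p₀ < ⋯ < p_m` produces `m` algebraically independent elements of
`S ⧸ p₀` (pick `f ∈ p₁ \ p₀` and induct), so it suffices that every domain `D` in which the minors
vanish has transcendence degree at most `3`. In `D` the columns `(x₁ + x₂, x₁x₂), (x₃, x₄), …`
are proportional, so the Hankel part `x₃, …, x_{n+3}` is a geometric progression starting at its
first nonzero term `x_m`, and every coordinate is algebraic over `x₁, x₂, x_m` (or over
`x_m, x_{m+1}` when `x₁ + x₂ = 0`, which forces `x₁ = x₂ = 0`).
-/

open Algebra Function Cardinal Set

section Transcendence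

variable {k S : Type*} [CommRing S]

theorem algebraicIndependent_option_quotient_of_le [CommRing k] [Algebra k S] {p q : Ideal S}
    [p.IsPrime] (hpq : p ≤ q) {f : S} (hfq : f ∈ q) (hfp : f ∉ p) {ι : Type*} {t : ι → S}
    (ht : AlgebraicIndependent k (Ideal.Quotient.mk q ∘ t)) :
    AlgebraicIndependent k (Ideal.Quotient.mk p ∘ fun o : Option ι ↦ o.elim f t) := by
  set π := Ideal.Quotient.factorₐ k hpq
  have hπt : π ∘ Ideal.Quotient.mk p ∘ t = Ideal.Quotient.mk q ∘ t := rfl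
  have htp : AlgebraicIndependent k (Ideal.Quotient.mk p ∘ t) := .of_comp π (hπt ▸ ht)
  have hπ_inj : ∀ r ∈ adjoin k (range (Ideal.Quotient.mk p ∘ t)), π r = 0 → r = 0 := by
    intro r hr hr0
    rw [adjoin_range_eq_range_aeval] at hr
    obtain ⟨P, rfl⟩ := hr
    change π (MvPolynomial.aeval _ P) = 0 at hr0
    rw [← AlgHom.comp_apply, MvPolynomial.comp_aeval] at hr0
    change MvPolynomial.aeval _ P = 0
    rw [ht.eq_zero_of_aeval_eq_zero P hr0, map_zero]
  have hopt : (Ideal.Quotient.mk p ∘ fun o : Option ι ↦ o.elim f t) =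
      fun o : Option ι ↦ o.elim (Ideal.Quotient.mk p f) (Ideal.Quotient.mk p ∘ t) := by
    funext o; cases o <;> rfl
  rw [hopt]
  refine AlgebraicIndependent.option_iff.mpr ⟨htp, fun halg ↦ ?_⟩
  -- As `f̄` is a nonzerodivisor, an algebraic relation gives `f̄ * s = r` with `0 ≠ r ∈ k[t̄]`;
  -- reducing modulo `q` kills `f̄`, so `r ↦ 0`, against the independence of the `t` modulo `q`.
  have hf0 : Ideal.Quotient.mk p f ∈ nonZeroDivisors (S ⧸ p) :=
    mem_nonZeroDivisors_of_ne_zero (by rwa [Ne, Ideal.Quotient.eq_zero_iff_mem])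
  obtain ⟨_, -, r, hr0, hr⟩ := halg.exists_nonzero_eq_adjoin_mul hf0
  refine hr0 (Subtype.ext (hπ_inj r r.2 ?_))
  have := congrArg π hr
  rwa [map_mul, Ideal.Quotient.factorₐ_apply_mk, Ideal.Quotient.eq_zero_iff_mem.mpr hfq,
    zero_mul, eq_comm] at this

variable [Field k] [Algebra k S]

theorem exists_algebraicIndependent_of_ltSeries (P : LTSeries (PrimeSpectrum S)) :
    ∃ t : Fin P.length → S, AlgebraicIndependent k (Ideal.Quotient.mk P.head.asIdeal ∘ t) := by
  induction P using RelSeries.inductionOn with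
  | singleton p =>
    refine ⟨Fin.elim0, (algebraicIndependent_empty_type_iff (ι := Fin 0)).mpr ?_⟩
    have := Ideal.Quotient.nontrivial_iff.mpr p.isPrime.ne_top
    exact (algebraMap k _).injective
  | cons P p hp ih =>
    obtain ⟨t, ht⟩ := ih
    obtain ⟨f, hfq, hfp⟩ := SetLike.exists_of_lt (show p.asIdeal < P.head.asIdeal from hp)
    have hlen : (P.cons p hp).length = P.length + 1 := by simp
    refine ⟨(fun o : Option (Fin P.length) ↦ o.elim f t) ∘ finSuccEquiv _ ∘ Fin.cast hlen, ?_⟩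
    exact (algebraicIndependent_option_quotient_of_le (k := k) hp.le hfq hfp ht).comp _
      ((finSuccEquiv _).injective.comp (Fin.cast_injective hlen))

theorem ringKrullDim_le_of_trdeg_quotient_le {d : ℕ}
    (h : ∀ p : Ideal S, p.IsPrime → trdeg k (S ⧸ p) ≤ d) : ringKrullDim S ≤ d := by
  refine iSup_le fun P ↦ ?_
  obtain ⟨t, ht⟩ := exists_algebraicIndependent_of_ltSeries (k := k) P
  have hcard := ht.lift_cardinalMk_le_trdeg.trans (Cardinal.lift_le.mpr (h _ P.head.isPrime))
  have : P.length ≤ d := by simpa using hcard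
  exact_mod_cast this

end Transcendence

theorem isAlgebraic_adjoin_of_mem {k D : Type*} [CommRing k] [CommRing D] [Nontrivial D]
    [Algebra k D] {s : Set D} {x : D} (hx : x ∈ s) : IsAlgebraic (adjoin k s) x :=
  isAlgebraic_algebraMap (⟨x, subset_adjoin hx⟩ : adjoin k s)

theorem trdeg_le_of_forall_isAlgebraic {k D : Type*} [CommRing k] [CommRing D] [IsDomain D]
    [Algebra k D] {ι : Type*} {z : ι → D} (hz : adjoin k (range z) = ⊤) {s : Set D}
    (h : ∀ i, IsAlgebraic (adjoin k s) (z i)) : trdeg k D ≤ #s := by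
  have : Algebra.IsAlgebraic (adjoin k s) D := ⟨fun a ↦ by
    refine IsAlgebraic.adjoin_of_forall_isAlgebraic (s := range z) ?_ ?_
    · rintro _ ⟨⟨i, rfl⟩, -⟩
      exact h i
    · exact isAlgebraic_algebraMap (⟨a, hz ▸ trivial⟩ : adjoin k (range z))⟩
  exact Algebra.IsAlgebraic.trdeg_le_cardinalMk k s

theorem ker_lt_ker_comp {A B C : Type*} [Ring A] [Ring B] [Ring C] (f : A →+* B) (g : B →+* C)
    {x : A} (hx : f x ≠ 0) (hgx : g (f x) = 0) : RingHom.ker f < RingHom.ker (g.comp f) :=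
  lt_of_le_of_ne (fun y hy ↦ by simp_all [RingHom.mem_ker])
    fun h ↦ hx (h ▸ RingHom.mem_ker.mpr hgx : x ∈ RingHom.ker f)

theorem le_ringKrullDim_of_strictMono_ker {A B : Type*} [CommRing A] [CommRing B] [IsDomain B]
    {m : ℕ} (F : Fin (m + 1) → A →+* B) (hF : StrictMono fun i ↦ RingHom.ker (F i)) :
    m ≤ ringKrullDim A :=
  Order.LTSeries.length_le_krullDim <| LTSeries.mk m
    (fun i ↦ (⟨RingHom.ker (F i), RingHom.ker_isPrime _⟩ : PrimeSpectrum A)) fun _ _ hij ↦ hF hij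

section Hankel

open Subalgebra

variable {D : Type*} [CommRing D] [IsDomain D] {n m : ℕ} {w : ℕ → D}

theorem mem_algebraicClosure_of_hankel {R : Type*} [CommRing R] [IsDomain R] [Algebra R D]
    (hm : 2 ≤ m)
    (hhank : ∀ i j, 2 ≤ i → i ≤ n + 1 → 2 ≤ j → j ≤ n + 1 → w i * w (j + 1) = w j * w (i + 1))
    (hbelow : ∀ j, 2 ≤ j → j < m → w j = 0) (hm0 : w m ≠ 0)
    (h0 : w 0 ∈ algebraicClosure R D) (h1 : w 1 ∈ algebraicClosure R D)
    (hwm : w m ∈ algebraicClosure R D) (hwm1 : m ≤ n + 1 → w (m + 1) ∈ algebraicClosure R D) :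
    ∀ j ≤ n + 2, w j ∈ algebraicClosure R D := by
  have habove : ∀ j, m ≤ j → j ≤ n + 2 → w j ∈ algebraicClosure R D := by
    intro j hmj hj
    induction j, hmj using Nat.le_induction with
    | base => exact hwm
    | succ j hmj ih =>
      refine IsAlgebraic.of_mul (mem_nonZeroDivisors_of_ne_zero hm0) hwm ?_
      rw [hhank m j hm (by omega) (by omega) (by omega)]
      exact mul_mem (ih (by omega)) (hwm1 (by omega))
  intro j hj
  rcases (show j = 0 ∨ j = 1 ∨ (2 ≤ j ∧ j < m) ∨ m ≤ j by omega) with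
    rfl | rfl | ⟨h2, hjm⟩ | hmj
  · exact h0
  · exact h1
  · rw [hbelow j h2 hjm]
    exact zero_mem _
  · exact habove j hmj hj

theorem exists_isAlgebraic_of_hankel {k : Type*} [CommRing k] [Algebra k D]
    (hcol : ∀ j, 2 ≤ j → j ≤ n + 1 → (w 0 + w 1) * w (j + 1) = w 0 * w 1 * w j)
    (hhank : ∀ i j, 2 ≤ i → i ≤ n + 1 → 2 ≤ j → j ≤ n + 1 → w i * w (j + 1) = w j * w (i + 1)) :
    ∃ u v t : D, ∀ j ≤ n + 2, IsAlgebraic (adjoin k {u, v, t}) (w j) := by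
  classical
  by_cases hzero : ∀ j, 2 ≤ j → j ≤ n + 2 → w j = 0
  · refine ⟨w 0, w 1, 0, fun j hj ↦ ?_⟩
    rcases (show j = 0 ∨ j = 1 ∨ 2 ≤ j by omega) with rfl | rfl | h2
    · exact isAlgebraic_adjoin_of_mem (by simp)
    · exact isAlgebraic_adjoin_of_mem (by simp)
    · exact isAlgebraic_adjoin_of_mem (by simp [hzero j h2 hj])
  push Not at hzero
  obtain ⟨hm2, hmn, hm0⟩ := Nat.find_spec hzero
  have hbelow : ∀ j, 2 ≤ j → j < Nat.find hzero → w j = 0 := fun j h2 hj ↦ by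
    by_contra hne
    exact Nat.find_min hzero hj ⟨h2, by omega, hne⟩
  set m := Nat.find hzero
  by_cases hxy : m ≤ n + 1 ∧ w 0 + w 1 = 0
  · have hy : w 1 = -w 0 := by linear_combination hxy.2
    have h0 : w 0 = 0 := by
      have : w 0 * w 1 * w m = 0 := by rw [← hcol m hm2 hxy.1, hxy.2, zero_mul]
      rwa [hy, mul_neg, neg_mul, neg_eq_zero, mul_eq_zero, mul_self_eq_zero,
        or_iff_left hm0] at this
    refine ⟨w m, w (m + 1), 0, fun j hj ↦ ?_⟩
    refine mem_algebraicClosure_of_hankel hm2 hhank hbelow hm0 ?_ ?_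
      (isAlgebraic_adjoin_of_mem (by simp)) (fun _ ↦ isAlgebraic_adjoin_of_mem (by simp)) j hj
    · exact isAlgebraic_adjoin_of_mem (by simp [h0])
    · exact isAlgebraic_adjoin_of_mem (by simp [hy, h0])
  · refine ⟨w 0, w 1, w m, fun j hj ↦ ?_⟩
    set C := algebraicClosure (adjoin k {w 0, w 1, w m}) D
    have h0 : w 0 ∈ C := isAlgebraic_adjoin_of_mem (by simp)
    have h1 : w 1 ∈ C := isAlgebraic_adjoin_of_mem (by simp)
    have hwm : w m ∈ C := isAlgebraic_adjoin_of_mem (by simp)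
    refine mem_algebraicClosure_of_hankel hm2 hhank hbelow hm0 h0 h1 hwm (fun hm ↦ ?_) j hj
    have hsum : w 0 + w 1 ≠ 0 := fun h ↦ hxy ⟨hm, h⟩
    refine IsAlgebraic.of_mul (mem_nonZeroDivisors_of_ne_zero hsum) (add_mem h0 h1) ?_
    rw [hcol m hm2 hm]
    exact mul_mem (mul_mem h0 h1) hwm

end Hankel

section Minors

/- Points are written as `w ∘ Fin.val` with `w : ℕ → B`, so that the index arithmetic of the
Hankel pattern happens in `ℕ`; the values of `w` beyond `n + 2` are irrelevant. -/
variable {B : Type*} [CommRing B] [Algebra ℂ B] {n : ℕ}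

theorem aeval_row1 (w : ℕ → B) (k : Fin (n + 1)) :
    aeval (w ∘ Fin.val) (row1 n k) = if (k : ℕ) = 0 then w 0 + w 1 else w (k + 1) := by
  unfold row1; split_ifs <;> simp

theorem aeval_row2 (w : ℕ → B) (k : Fin (n + 1)) :
    aeval (w ∘ Fin.val) (row2 n k) = if (k : ℕ) = 0 then w 0 * w 1 else w (k + 2) := by
  unfold row2; split_ifs <;> simp

theorem aeval_minors_eq_zero_iff (w : ℕ → B) :
    (∀ i j : Fin (n + 1),
        aeval (w ∘ Fin.val) (row1 n i * row2 n j - row1 n j * row2 n i) = 0) ↔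
      (∀ j, 2 ≤ j → j ≤ n + 1 → (w 0 + w 1) * w (j + 1) = w 0 * w 1 * w j) ∧
      ∀ i j, 2 ≤ i → i ≤ n + 1 → 2 ≤ j → j ≤ n + 1 → w i * w (j + 1) = w j * w (i + 1) := by
  simp only [map_sub, map_mul, aeval_row1, aeval_row2, sub_eq_zero]
  refine ⟨fun h ↦ ⟨fun j hj2 hjn ↦ ?_, fun i j hi2 hin hj2 hjn ↦ ?_⟩,
    fun ⟨hcol, hhank⟩ i j ↦ ?_⟩
  · obtain ⟨j, rfl⟩ : ∃ j', j = j' + 1 := ⟨j - 1, by omega⟩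
    linear_combination (by simpa [show j ≠ 0 by omega] using h 0 ⟨j, by omega⟩ :
      (w 0 + w 1) * w (j + 2) = w (j + 1) * (w 0 * w 1))
  · obtain ⟨i, rfl⟩ : ∃ i', i = i' + 1 := ⟨i - 1, by omega⟩
    obtain ⟨j, rfl⟩ : ∃ j', j = j' + 1 := ⟨j - 1, by omega⟩
    simpa [show i ≠ 0 by omega, show j ≠ 0 by omega] using h ⟨i, by omega⟩ ⟨j, by omega⟩
  · have := i.2; have := j.2
    split_ifs with hi hj hj
    · rfl
    · linear_combination hcol (j + 1) (by omega) (by omega)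
    · linear_combination -hcol (i + 1) (by omega) (by omega)
    · exact hhank (i + 1) (j + 1) (by omega) (by omega) (by omega) (by omega)

end Minors

noncomputable abbrev minorsIdeal (n : ℕ) : Ideal (MvPolynomial (Fin (n + 3)) ℂ) :=
  Ideal.span {m | ∃ i j : Fin (n + 1), m = row1 n i * row2 n j - row1 n j * row2 n i}

theorem trdeg_le_three_of_minors {n : ℕ} {D : Type*} [CommRing D] [IsDomain D] [Algebra ℂ D]
    (π : MvPolynomial (Fin (n + 3)) ℂ →ₐ[ℂ] D) (hπ : Surjective π)
    (hmin : ∀ i j : Fin (n + 1), π (row1 n i * row2 n j - row1 n j * row2 n i) = 0) :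
    trdeg ℂ D ≤ 3 := by
  set w : ℕ → D := extend Fin.val (π ∘ X) 0
  have hπw : π = aeval (w ∘ Fin.val) := by
    rw [show w ∘ Fin.val = π ∘ X from funext (Fin.val_injective.extend_apply _ _)]
    exact aeval_unique π
  obtain ⟨hcol, hhank⟩ := (aeval_minors_eq_zero_iff w).mp (hπw ▸ hmin)
  obtain ⟨u, v, t, halg⟩ := exists_isAlgebraic_of_hankel (k := ℂ) hcol hhank
  have hgen : adjoin ℂ (range (w ∘ (Fin.val : Fin (n + 3) → ℕ))) = ⊤ := by
    rw [adjoin_range_eq_range_aeval, ← hπw, AlgHom.range_eq_top]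
    exact hπ
  calc trdeg ℂ D ≤ #({u, v, t} : Set D) :=
        trdeg_le_of_forall_isAlgebraic hgen fun i ↦ halg i (by omega)
    _ ≤ 3 := by
      grw [mk_insert_le, mk_insert_le, mk_singleton]
      norm_num

theorem ringKrullDim_quotient_minorsIdeal_le (n : ℕ) :
    ringKrullDim (MvPolynomial (Fin (n + 3)) ℂ ⧸ minorsIdeal n) ≤ 3 := by
  refine ringKrullDim_le_of_trdeg_quotient_le (k := ℂ) fun p hp ↦ ?_
  refine trdeg_le_three_of_minors ((Ideal.Quotient.mkₐ ℂ p).comp (Ideal.Quotient.mkₐ ℂ _))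
    ((Ideal.Quotient.mkₐ_surjective ℂ p).comp (Ideal.Quotient.mkₐ_surjective ℂ _)) fun i j ↦ ?_
  have hmem : row1 n i * row2 n j - row1 n j * row2 n i ∈ minorsIdeal n :=
    Ideal.subset_span ⟨i, j, rfl⟩
  simp only [AlgHom.comp_apply, Ideal.Quotient.mkₐ_eq_mk,
    Ideal.Quotient.eq_zero_iff_mem.mpr hmem, map_zero]

/-- `(a, b, c) ↦ (a, b, c (a+b)^n, c ab (a+b)^(n-1), …, c (ab)^n)`: every column of the matrix
becomes a multiple of `(a + b, ab)`. -/
noncomputable def minorsParam (n : ℕ) : ℕ → MvPolynomial (Fin 3) ℂ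
  | 0 => X 0
  | 1 => X 1
  | j + 2 => X 2 * (X 0 * X 1) ^ j * (X 0 + X 1) ^ (n - j)

theorem minorsParam_mul (n i j : ℕ) : minorsParam n (i + 2) * minorsParam n (j + 2) =
    X 2 ^ 2 * (X 0 * X 1) ^ (i + j) * (X 0 + X 1) ^ (n - i + (n - j)) := by
  simp only [minorsParam, pow_add]
  ring

theorem minorsIdeal_le_ker_minorsParam (n : ℕ) :
    minorsIdeal n ≤ RingHom.ker (aeval (minorsParam n ∘ Fin.val)) := by
  refine Ideal.span_le.mpr ?_
  rintro _ ⟨i, j, rfl⟩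
  refine RingHom.mem_ker.mpr <|
    (aeval_minors_eq_zero_iff _).mpr ⟨fun j hj2 hjn ↦ ?_, fun i j hi2 hin hj2 hjn ↦ ?_⟩ i j
  · obtain ⟨j, rfl⟩ : ∃ j', j = j' + 2 := ⟨j - 2, by omega⟩
    obtain ⟨r, hr⟩ : ∃ r, n - j = r + 1 := ⟨n - j - 1, by omega⟩
    simp only [minorsParam, show n - (j + 1) = r by omega, hr]
    ring
  · obtain ⟨i, rfl⟩ : ∃ i', i = i' + 2 := ⟨i - 2, by omega⟩
    obtain ⟨j, rfl⟩ : ∃ j', j = j' + 2 := ⟨j - 2, by omega⟩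
    rw [minorsParam_mul, mul_comm (minorsParam n (j + 2)), minorsParam_mul,
      show i + (j + 1) = i + 1 + j by omega,
      show n - i + (n - (j + 1)) = n - (i + 1) + (n - j) by omega]

theorem three_le_ringKrullDim_quotient_minorsIdeal (n : ℕ) :
    3 ≤ ringKrullDim (MvPolynomial (Fin (n + 3)) ℂ ⧸ minorsIdeal n) := by
  set F₀ := Ideal.Quotient.lift (minorsIdeal n) (aeval (minorsParam n ∘ Fin.val)).toRingHom
    fun a ha ↦ minorsIdeal_le_ker_minorsParam n ha
  set κ : Fin 3 → MvPolynomial (Fin 3) ℂ →+* MvPolynomial (Fin 3) ℂ :=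
    fun j ↦ (aeval (update X j 0)).toRingHom
  set F₁ := (κ 1).comp F₀
  set F₂ := (κ 2).comp F₁
  set x := fun j : Fin (n + 3) ↦ Ideal.Quotient.mk (minorsIdeal n) (X j)
  have hF₀ : ∀ j, F₀ (x j) = minorsParam n j := fun j ↦ by simp [F₀, x]
  refine le_ringKrullDim_of_strictMono_ker ![F₀, F₁, F₂, (κ 0).comp F₂] <|
    Fin.strictMono_iff_lt_succ.mpr fun i ↦ ?_
  fin_cases i
  · exact ker_lt_ker_comp _ _ (x := x ⟨1, by omega⟩) (by simp [hF₀, minorsParam])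
      (by simp [hF₀, minorsParam, κ])
  · exact ker_lt_ker_comp _ _ (x := x ⟨2, by omega⟩) (by simp [F₁, hF₀, minorsParam, κ])
      (by simp [F₁, hF₀, minorsParam, κ])
  · exact ker_lt_ker_comp _ _ (x := x ⟨0, by omega⟩) (by simp [F₂, F₁, hF₀, minorsParam, κ])
      (by simp [F₂, F₁, hF₀, minorsParam, κ])

theorem stmt8_general (n : ℕ) :
    ringKrullDim (MvPolynomial (Fin (n + 3)) ℂ ⧸
      Ideal.span {m | ∃ i j : Fin (n + 1),
        m = row1 n i * row2 n j - row1 n j * row2 n i}) = 3 :=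
  le_antisymm (ringKrullDim_quotient_minorsIdeal_le n)
    (three_le_ringKrullDim_quotient_minorsIdeal n)

theorem stmt8 (n : ℕ) (hn : 1 ≤ n) :
    ringKrullDim (MvPolynomial (Fin (n + 3)) ℂ ⧸
      Ideal.span {m | ∃ i j : Fin (n + 1),
        m = row1 n i * row2 n j - row1 n j * row2 n i}) = 3 :=
  stmt8_general n
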